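/- Let p ≥ 1 and q ≥ 3 be integers. If H is a simple graph on a finite vertex type that is L-cospectral with the jellyfish graph G = JFG(p,q), then the largest eigenvalue μ₁(H) of the Laplacian matrix L(H) satisfies p + 3 ≤ μ₁(H) ≤ p + 5 − 2/(p + 2). -/

import Mathlib

open SimpleGraph Matrix Polynomial
open scoped Classical

/-- The jellyfish graph `JFG(p,q)`: a cycle `C_q` together with `q` copies of the
star `K_{1,p}`, the center of each star merged with one cycle vertex.  Cycle
vertices are `Sum.inl i : Fin q`, pendant vertices are `Sum.inr (j, k)`. -/
def jellyfish (p q : ℕ) : SimpleGraph (Fin q ⊕ Fin q × Fin p) :=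
  SimpleGraph.fromRel (fun a b =>
    match a, b with
    | Sum.inl i, Sum.inl j => (j : ℕ) = ((i : ℕ) + 1) % q ∨ (i : ℕ) = ((j : ℕ) + 1) % q
    | Sum.inl i, Sum.inr jk => i = jk.1
    | _, _ => False)

lemma lapMatrix_isHermitian {V : Type*} [Fintype V] [DecidableEq V]
    (G : SimpleGraph V) : (G.lapMatrix ℝ).IsHermitian := by
  rw [Matrix.IsHermitian, Matrix.conjTranspose_eq_transpose_of_trivial]
  exact G.isSymm_lapMatrix ℝ


section jelly
variable {p q : ℕ} [NeZero q]

lemma val_one_fin (hq : 3 ≤ q) : ((1 : Fin q) : ℕ) = 1 := by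
  rw [Fin.val_one']
  exact Nat.mod_eq_of_lt (by omega)

lemma fin_one_ne_zero (hq : 3 ≤ q) : (1 : Fin q) ≠ 0 := by
  intro h
  have := congrArg Fin.val h
  rw [val_one_fin hq] at this
  simp at this

lemma fin_two_ne_zero (hq : 3 ≤ q) : (1 : Fin q) + 1 ≠ 0 := by
  intro h
  have := congrArg Fin.val h
  rw [Fin.val_add, val_one_fin hq, Nat.mod_eq_of_lt (by omega)] at this
  simp at this

lemma jelly_adj_inl_inl (hq : 3 ≤ q) (i j : Fin q) :
    (jellyfish p q).Adj (Sum.inl i) (Sum.inl j) ↔ j = i + 1 ∨ i = j + 1 := by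
  have h1 : ∀ a b : Fin q, ((a : ℕ) = ((b : ℕ) + 1) % q) ↔ a = b + 1 := by
    intro a b
    rw [Fin.ext_iff, Fin.val_add, val_one_fin hq]
  rw [jellyfish, SimpleGraph.fromRel_adj]
  constructor
  · rintro ⟨-, h | h⟩
    · rcases h with h | h
      · exact Or.inl ((h1 _ _).mp h)
      · exact Or.inr ((h1 _ _).mp h)
    · rcases h with h | h
      · exact Or.inr ((h1 _ _).mp h)
      · exact Or.inl ((h1 _ _).mp h)
  · intro h
    have hne : i ≠ j := by
      rintro rfl
      rcases h with h | h <;>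
      · have := congrArg (· - i) h
        simp [sub_eq_iff_eq_add] at this
        exact fin_one_ne_zero hq (by simpa using this.symm ▸ rfl)
    refine ⟨by simpa using hne, Or.inl ?_⟩
    rcases h with h | h
    · exact Or.inl ((h1 _ _).mpr h)
    · exact Or.inr ((h1 _ _).mpr h)

lemma jelly_adj_inl_inr (i : Fin q) (jk : Fin q × Fin p) :
    (jellyfish p q).Adj (Sum.inl i) (Sum.inr jk) ↔ i = jk.1 := by
  rw [jellyfish, SimpleGraph.fromRel_adj]
  constructor
  · rintro ⟨-, h | h⟩
    · exact h
    · exact absurd h id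
  · intro h
    exact ⟨by simp, Or.inl h⟩

lemma jelly_adj_inr_inl (i : Fin q) (jk : Fin q × Fin p) :
    (jellyfish p q).Adj (Sum.inr jk) (Sum.inl i) ↔ i = jk.1 :=
  (SimpleGraph.adj_comm _ _ _).trans (jelly_adj_inl_inr i jk)

lemma jelly_adj_inr_inr (jk j'k' : Fin q × Fin p) :
    ¬ (jellyfish p q).Adj (Sum.inr jk) (Sum.inr j'k') := by
  rw [jellyfish, SimpleGraph.fromRel_adj]
  rintro ⟨-, h | h⟩ <;> exact h

end jelly

section jelly2
variable {p q : ℕ} [NeZero q]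

lemma add_one_ne_sub_one (hq : 3 ≤ q) (i : Fin q) : i + 1 ≠ i - 1 := by
  intro h
  have h2 : (1 : Fin q) + 1 = 0 := by
    have := sub_eq_zero.mpr h
    rwa [show i + 1 - (i - 1) = 1 + 1 from by abel] at this
  exact fin_two_ne_zero hq h2

lemma sum_ite_adj_inl (hq : 3 ≤ q) (i : Fin q) (f : Fin q ⊕ Fin q × Fin p → ℝ) :
    ∑ v, (if (jellyfish p q).Adj (Sum.inl i) v then f v else 0)
      = f (Sum.inl (i + 1)) + f (Sum.inl (i - 1)) + ∑ k : Fin p, f (Sum.inr (i, k)) := by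
  rw [Fintype.sum_sum_type]
  congr 1
  · have hcond : ∀ j : Fin q, (jellyfish p q).Adj (Sum.inl i) (Sum.inl j)
        ↔ j ∈ ({i + 1, i - 1} : Finset (Fin q)) := by
      intro j
      rw [jelly_adj_inl_inl hq, Finset.mem_insert, Finset.mem_singleton]
      constructor
      · rintro (h | h)
        · exact Or.inl h
        · exact Or.inr (by rw [eq_sub_iff_add_eq, ← h])
      · rintro (h | h)
        · exact Or.inl h
        · exact Or.inr (by rw [h]; abel)
    calc ∑ j : Fin q, (if (jellyfish p q).Adj (Sum.inl i) (Sum.inl j) then f (Sum.inl j) else 0)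
        = ∑ j : Fin q, (if j ∈ ({i + 1, i - 1} : Finset (Fin q)) then f (Sum.inl j) else 0) := by
          refine Finset.sum_congr rfl fun j _ => ?_
          rw [if_congr (hcond j) rfl rfl]
      _ = ∑ j ∈ ({i + 1, i - 1} : Finset (Fin q)), f (Sum.inl j) := by
          rw [Finset.sum_ite_mem, Finset.univ_inter]
      _ = f (Sum.inl (i + 1)) + f (Sum.inl (i - 1)) :=
          Finset.sum_pair (add_one_ne_sub_one hq i)
  · simp only [jelly_adj_inl_inr]
    rw [Fintype.sum_prod_type]
    calc ∑ j : Fin q, ∑ k : Fin p, (if i = (j, k).1 then f (Sum.inr (j, k)) else 0)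
        = ∑ j : Fin q, (if i = j then ∑ k : Fin p, f (Sum.inr (j, k)) else 0) := by
          refine Finset.sum_congr rfl fun j _ => ?_
          split <;> simp
      _ = ∑ k : Fin p, f (Sum.inr (i, k)) := by
          rw [Finset.sum_ite_eq]; simp

lemma sum_ite_adj_inr (jk : Fin q × Fin p) (f : Fin q ⊕ Fin q × Fin p → ℝ) :
    ∑ v, (if (jellyfish p q).Adj (Sum.inr jk) v then f v else 0) = f (Sum.inl jk.1) := by
  rw [Fintype.sum_sum_type]
  have h2 : ∑ j'k' : Fin q × Fin p,
      (if (jellyfish p q).Adj (Sum.inr jk) (Sum.inr j'k') then f (Sum.inr j'k') else 0) = 0 := by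
    refine Finset.sum_eq_zero fun v _ => ?_
    rw [if_neg (jelly_adj_inr_inr jk v)]
  rw [h2, add_zero]
  simp only [jelly_adj_inr_inl]
  rw [Finset.sum_ite_eq']; simp

end jelly2

lemma lap_diag {V : Type*} [Fintype V] [DecidableEq V] (G : SimpleGraph V) [DecidableRel G.Adj]
    (k : V) : G.lapMatrix ℝ k k = G.degree k := by
  simp [SimpleGraph.lapMatrix, SimpleGraph.degMatrix]

lemma lap_offdiag_sum {V : Type*} [Fintype V] [DecidableEq V] (G : SimpleGraph V)
    [DecidableRel G.Adj] (w : V → ℝ) (hw : ∀ v, 0 ≤ w v) (k : V) :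
    ∑ j ∈ Finset.univ.erase k, |G.lapMatrix ℝ k j| * w j
      = ∑ j, (if G.Adj k j then w j else 0) := by
  rw [← Finset.add_sum_erase _ _ (Finset.mem_univ k), if_neg (G.irrefl), zero_add]
  refine Finset.sum_congr rfl fun j hj => ?_
  have hkj : k ≠ j := fun h => (Finset.mem_erase.mp hj).1 h.symm
  have : G.lapMatrix ℝ k j = - (if G.Adj k j then 1 else 0) := by
    simp [SimpleGraph.lapMatrix, SimpleGraph.degMatrix, Matrix.diagonal_apply_ne _ hkj]
  rw [this, abs_neg]
  split
  · simp
  · simp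

lemma charpoly_diagonal' {n : Type*} [Fintype n] [DecidableEq n] (d : n → ℝ) :
    (Matrix.diagonal d).charpoly = ∏ i, (X - C (d i)) := by
  have h : charmatrix (Matrix.diagonal d) = Matrix.diagonal (fun i => X - C (d i)) := by
    ext i j
    by_cases hij : i = j
    · subst hij; simp
    · simp [charmatrix_apply_ne _ _ _ hij, Matrix.diagonal_apply_ne _ hij]
  rw [Matrix.charpoly, h, Matrix.det_diagonal]

lemma charpoly_eq_prod_eigenvalues {n : Type*} [Fintype n] [DecidableEq n] {A : Matrix n n ℝ}
    (hA : A.IsHermitian) :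
    A.charpoly = ∏ i, (X - C (hA.eigenvalues i)) := by
  classical
  set U : Matrix n n ℝ := (hA.eigenvectorUnitary : Matrix n n ℝ) with hUdef
  have hUU : U * star U = 1 := Matrix.mem_unitaryGroup_iff.mp hA.eigenvectorUnitary.2
  have hspec : A = U * Matrix.diagonal hA.eigenvalues * star U := by
    have := hA.spectral_theorem
    simpa using this
  have hmap : ∀ M N : Matrix n n ℝ, (M * N).map (C : ℝ →+* ℝ[X]) = M.map C * N.map C :=
    fun M N => Matrix.map_mul
  have hone : U.map (C : ℝ →+* ℝ[X]) * (star U).map C = 1 := by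
    rw [← hmap, hUU]
    exact Matrix.map_one _ (map_zero C) (map_one C)
  have hcomm : ∀ M : Matrix n n ℝ[X], Matrix.scalar n (X : ℝ[X]) * M = M * Matrix.scalar n X :=
    fun M => Matrix.scalar_commute X (fun r => Commute.all _ _) M
  have hcm : charmatrix A =
      U.map (C : ℝ →+* ℝ[X]) * charmatrix (Matrix.diagonal hA.eigenvalues) * (star U).map C := by
    rw [charmatrix, charmatrix, mul_sub, sub_mul]
    congr 1
    · rw [← hcomm, mul_assoc, hone, mul_one]
    · simp only [RingHom.mapMatrix_apply]
      conv_lhs => rw [hspec, hmap, hmap]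
  rw [Matrix.charpoly, hcm, Matrix.det_mul, Matrix.det_mul, mul_comm ((U.map _).det),
    mul_assoc, ← Matrix.det_mul, hone, Matrix.det_one, mul_one, ← Matrix.charpoly,
    charpoly_diagonal']

/-- From equal characteristic polynomials, equal suprema of eigenvalues. -/
lemma ciSup_eigenvalues_eq_of_charpoly_eq {V W : Type*} [Fintype V] [DecidableEq V]
    [Fintype W] [DecidableEq W] [Nonempty W]
    {A : Matrix V V ℝ} {B : Matrix W W ℝ} (hA : A.IsHermitian) (hB : B.IsHermitian)
    (h : A.charpoly = B.charpoly) :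
    (⨆ i, hA.eigenvalues i) = (⨆ i, hB.eigenvalues i) := by
  have hroots : (Finset.univ.val.map hA.eigenvalues) = (Finset.univ.val.map hB.eigenvalues) := by
    have h1 : A.charpoly = (Multiset.map (fun a => X - C a)
        (Finset.univ.val.map hA.eigenvalues)).prod := by
      rw [charpoly_eq_prod_eigenvalues hA, Multiset.map_map, Finset.prod]
      rfl
    have h2 : B.charpoly = (Multiset.map (fun a => X - C a)
        (Finset.univ.val.map hB.eigenvalues)).prod := by
      rw [charpoly_eq_prod_eigenvalues hB, Multiset.map_map, Finset.prod]
      rfl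
    have := h1.symm.trans (h.trans h2)
    have hr := congrArg Polynomial.roots this
    rwa [Polynomial.roots_multiset_prod_X_sub_C, Polynomial.roots_multiset_prod_X_sub_C] at hr
  haveI : Nonempty V := by
    rw [← Fintype.card_pos_iff]
    have := congrArg Multiset.card hroots
    simp only [Multiset.card_map] at this
    have : Fintype.card V = Fintype.card W := by simpa [Finset.card_univ] using this
    rw [this]
    exact Fintype.card_pos
  apply le_antisymm
  · refine ciSup_le fun i => ?_
    have : hA.eigenvalues i ∈ Finset.univ.val.map hB.eigenvalues := by
      rw [← hroots]
      exact Multiset.mem_map_of_mem _ (Finset.mem_univ_val i)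
    obtain ⟨j, -, hj⟩ := Multiset.mem_map.mp this
    rw [← hj]
    exact le_ciSup (Set.Finite.bddAbove (Set.finite_range _)) j
  · refine ciSup_le fun i => ?_
    have : hB.eigenvalues i ∈ Finset.univ.val.map hA.eigenvalues := by
      rw [hroots]
      exact Multiset.mem_map_of_mem _ (Finset.mem_univ_val i)
    obtain ⟨j, -, hj⟩ := Multiset.mem_map.mp this
    rw [← hj]
    exact le_ciSup (Set.Finite.bddAbove (Set.finite_range _)) j

lemma dotProduct_mulVec_le_ciSup {n : Type*} [Fintype n] [DecidableEq n] [Nonempty n]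
    {A : Matrix n n ℝ} (hA : A.IsHermitian) (x : n → ℝ) :
    x ⬝ᵥ (A *ᵥ x) ≤ (⨆ i, hA.eigenvalues i) * (x ⬝ᵥ x) := by
  classical
  set U : Matrix n n ℝ := (hA.eigenvectorUnitary : Matrix n n ℝ) with hUdef
  have hUU : U * star U = 1 := Matrix.mem_unitaryGroup_iff.mp hA.eigenvectorUnitary.2
  have hspec : A = U * Matrix.diagonal hA.eigenvalues * star U := by
    have := hA.spectral_theorem
    simpa using this
  obtain ⟨y, hy1, hy2⟩ : ∃ y : n → ℝ, (∀ z, x ⬝ᵥ (U *ᵥ z) = y ⬝ᵥ z) ∧ y = star U *ᵥ x := by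
    refine ⟨star U *ᵥ x, fun z => ?_, rfl⟩
    rw [Matrix.dotProduct_mulVec]
    congr 1
    ext j
    simp [Matrix.vecMul, Matrix.mulVec, dotProduct, Matrix.star_apply, mul_comm]
  have hxx : x ⬝ᵥ x = y ⬝ᵥ y := by
    calc x ⬝ᵥ x = x ⬝ᵥ ((U * star U) *ᵥ x) := by rw [hUU, Matrix.one_mulVec]
      _ = x ⬝ᵥ (U *ᵥ (star U *ᵥ x)) := by rw [Matrix.mulVec_mulVec]
      _ = y ⬝ᵥ (star U *ᵥ x) := hy1 _
      _ = y ⬝ᵥ y := by rw [← hy2]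
  have hmain : x ⬝ᵥ (A *ᵥ x) = y ⬝ᵥ (Matrix.diagonal hA.eigenvalues *ᵥ y) := by
    calc x ⬝ᵥ (A *ᵥ x)
        = x ⬝ᵥ (U *ᵥ (Matrix.diagonal hA.eigenvalues *ᵥ (star U *ᵥ x))) := by
          rw [Matrix.mulVec_mulVec, Matrix.mulVec_mulVec, ← hspec]
      _ = y ⬝ᵥ (Matrix.diagonal hA.eigenvalues *ᵥ (star U *ᵥ x)) := hy1 _
      _ = y ⬝ᵥ (Matrix.diagonal hA.eigenvalues *ᵥ y) := by rw [← hy2]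
  rw [hmain, hxx]
  have hbd : ∀ j, hA.eigenvalues j ≤ ⨆ i, hA.eigenvalues i :=
    fun j => le_ciSup (Set.Finite.bddAbove (Set.finite_range _)) j
  calc y ⬝ᵥ (Matrix.diagonal hA.eigenvalues *ᵥ y)
      = ∑ j, hA.eigenvalues j * (y j)^2 := by
        simp [dotProduct, Matrix.mulVec_diagonal]
        refine Finset.sum_congr rfl fun j _ => ?_
        ring
    _ ≤ ∑ j, (⨆ i, hA.eigenvalues i) * (y j)^2 :=
        Finset.sum_le_sum fun j _ => mul_le_mul_of_nonneg_right (hbd j) (sq_nonneg _)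
    _ = (⨆ i, hA.eigenvalues i) * (y ⬝ᵥ y) := by
        rw [← Finset.mul_sum]
        congr 1
        simp [dotProduct, sq]

lemma eigenvalues_le_of_gershgorin {n : Type*} [Fintype n] [DecidableEq n]
    {A : Matrix n n ℝ} (hA : A.IsHermitian) (w : n → ℝ) (hw : ∀ i, 0 < w i) (r : ℝ)
    (hr : ∀ k, A k k + (w k)⁻¹ * (∑ j ∈ Finset.univ.erase k, |A k j| * w j) ≤ r)
    (i : n) : hA.eigenvalues i ≤ r := by
  classical
  set μ := hA.eigenvalues i with hμdef
  set v : n → ℝ := ⇑(hA.eigenvectorBasis i) with hvdef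
  have hv : A *ᵥ v = μ • v := hA.mulVec_eigenvectorBasis i
  have hvne : v ≠ 0 := by
    have := hA.eigenvectorBasis.orthonormal.ne_zero i
    intro h
    apply this
    ext j
    exact congrFun h j
  set B : Matrix n n ℝ := Matrix.of (fun k j => (w k)⁻¹ * A k j * w j) with hBdef
  set u : n → ℝ := fun j => (w j)⁻¹ * v j with hudef
  have hu : B *ᵥ u = μ • u := by
    have key : ∀ k, (B *ᵥ u) k = (w k)⁻¹ * (A *ᵥ v) k := by
      intro k
      simp only [Matrix.mulVec, dotProduct, hBdef, hudef, Matrix.of_apply]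
      rw [Finset.mul_sum]
      refine Finset.sum_congr rfl fun j _ => ?_
      rw [show (w k)⁻¹ * A k j * w j * ((w j)⁻¹ * v j)
          = (w k)⁻¹ * (A k j * v j) * (w j * (w j)⁻¹) from by ring,
        mul_inv_cancel₀ (hw j).ne', mul_one]
    ext k
    rw [key, hv]
    simp only [Pi.smul_apply, smul_eq_mul, hudef]
    ring
  have hune : u ≠ 0 := by
    intro h
    apply hvne
    ext j
    have : u j = 0 := congrFun h j
    have hwj := (hw j).ne'
    simp only [hudef] at this
    field_simp at this
    simpa using this
  have heig : Module.End.HasEigenvalue (Matrix.toLin' B) μ := by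
    apply Module.End.hasEigenvalue_of_hasEigenvector (x := u)
    refine ⟨Module.End.mem_eigenspace_iff.mpr ?_, hune⟩
    rw [Matrix.toLin'_apply]
    exact hu
  obtain ⟨k, hk⟩ := eigenvalue_mem_ball heig
  rw [Metric.mem_closedBall, Real.dist_eq] at hk
  have h1 : B k k = A k k := by
    simp only [hBdef, Matrix.of_apply]
    rw [mul_comm ((w k)⁻¹) (A k k), mul_assoc, inv_mul_cancel₀ (hw k).ne', mul_one]
  have h2 : ∀ j, ‖B k j‖ = (w k)⁻¹ * (|A k j| * w j) := by
    intro j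
    simp only [hBdef, Matrix.of_apply, Real.norm_eq_abs, abs_mul, abs_inv,
      abs_of_pos (hw k), abs_of_pos (hw j)]
    ring
  have h3 : ∑ j ∈ Finset.univ.erase k, ‖B k j‖
      = (w k)⁻¹ * ∑ j ∈ Finset.univ.erase k, |A k j| * w j := by
    rw [Finset.mul_sum]
    exact Finset.sum_congr rfl fun j _ => h2 j
  have h4 : μ - A k k ≤ (w k)⁻¹ * ∑ j ∈ Finset.univ.erase k, |A k j| * w j := by
    rw [← h3, ← h1]
    exact (le_abs_self _).trans hk
  linarith [hr k]

section main
variable {p q : ℕ} [NeZero q]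

/-- Test vector for the Rayleigh quotient lower bound. -/
noncomputable def xvec (p q : ℕ) [NeZero q] : Fin q ⊕ Fin q × Fin p → ℝ :=
  Sum.elim (fun i => if i = 0 then (p : ℝ) + 2 else if i = 1 ∨ i = -1 then -1 else 0)
    (fun jk => if jk.1 = 0 then -1 else 0)

lemma neg_one_ne_zero_fin (hq : 3 ≤ q) : (-1 : Fin q) ≠ 0 := by
  intro h
  apply fin_one_ne_zero hq
  rw [← neg_neg (1 : Fin q), h, neg_zero]

lemma neg_one_ne_one_fin (hq : 3 ≤ q) : (-1 : Fin q) ≠ 1 := by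
  intro h
  have h2 : (0 : Fin q) = 1 + 1 := by rw [← neg_add_cancel (1 : Fin q), h]
  exact fin_two_ne_zero hq h2.symm

lemma xvec_inl_zero (hq : 3 ≤ q) : xvec p q (Sum.inl 0) = (p : ℝ) + 2 := by
  simp [xvec]

lemma xvec_inl_one (hq : 3 ≤ q) : xvec p q (Sum.inl (0 + 1)) = -1 := by
  rw [zero_add]
  simp [xvec, fin_one_ne_zero hq]

lemma xvec_inl_negone (hq : 3 ≤ q) : xvec p q (Sum.inl (0 - 1)) = -1 := by
  rw [zero_sub]
  simp [xvec, neg_one_ne_zero_fin hq]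

lemma xvec_inr (hq : 3 ≤ q) (k : Fin p) : xvec p q (Sum.inr (0, k)) = -1 := by
  simp [xvec]

lemma xvec_dotProduct (hp : 1 ≤ p) (hq : 3 ≤ q) :
    xvec p q ⬝ᵥ xvec p q = ((p : ℝ) + 2) * ((p : ℝ) + 3) := by
  rw [dotProduct, Fintype.sum_sum_type]
  have hcyc : ∑ i : Fin q, xvec p q (Sum.inl i) * xvec p q (Sum.inl i)
      = ((p : ℝ) + 2)^2 + 1 + 1 := by
    have hpt : ∀ i : Fin q, xvec p q (Sum.inl i) * xvec p q (Sum.inl i)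
        = (if i = 0 then ((p : ℝ) + 2)^2 else 0) + ((if i = 1 then (1:ℝ) else 0)
          + (if i = -1 then (1:ℝ) else 0)) := by
      intro i
      by_cases h0 : i = 0
      · subst h0
        simp [xvec, (fin_one_ne_zero hq).symm, Ne.symm (neg_one_ne_zero_fin hq), sq]
      · by_cases h1 : i = 1
        · subst h1
          simp [xvec, fin_one_ne_zero hq, Ne.symm (neg_one_ne_one_fin hq)]
        · by_cases hm : i = -1
          · subst hm
            simp [xvec, neg_one_ne_zero_fin hq, neg_one_ne_one_fin hq]
          · simp [xvec, h0, h1, hm]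
    rw [Finset.sum_congr rfl fun i _ => hpt i, Finset.sum_add_distrib, Finset.sum_add_distrib,
      Finset.sum_ite_eq', Finset.sum_ite_eq', Finset.sum_ite_eq']
    simp only [Finset.mem_univ, if_true]
    ring
  have hpend : ∑ jk : Fin q × Fin p, xvec p q (Sum.inr jk) * xvec p q (Sum.inr jk)
      = (p : ℝ) := by
    have hpt : ∀ jk : Fin q × Fin p, xvec p q (Sum.inr jk) * xvec p q (Sum.inr jk)
        = if jk.1 = 0 then (1:ℝ) else 0 := by
      intro jk
      simp only [xvec, Sum.elim_inr]
      split <;> norm_num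
    rw [Finset.sum_congr rfl fun jk _ => hpt jk, Fintype.sum_prod_type]
    have hin : ∀ j : Fin q, ∑ k : Fin p, (if (j, k).1 = 0 then (1:ℝ) else 0)
        = if j = 0 then (p : ℝ) else 0 := by
      intro j
      split_ifs with h <;> simp [h]
    rw [Finset.sum_congr rfl fun j _ => hin j, Finset.sum_ite_eq']
    simp
  rw [hcyc, hpend]
  ring

lemma xvec_lap_lower (hp : 1 ≤ p) (hq : 3 ≤ q) :
    ((p : ℝ) + 2) * ((p : ℝ) + 3)^2
      ≤ xvec p q ⬝ᵥ ((jellyfish p q).lapMatrix ℝ *ᵥ xvec p q) := by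
  have hquad := SimpleGraph.lapMatrix_toLinearMap₂' ℝ (jellyfish p q) (xvec p q)
  rw [Matrix.toLinearMap₂'_apply'] at hquad
  rw [hquad]
  set x := xvec p q with hxdef
  set u0 : Fin q ⊕ Fin q × Fin p := Sum.inl 0 with hu0
  have hS : ∑ v, (if (jellyfish p q).Adj u0 v then (x u0 - x v)^2 else 0)
      = ((p : ℝ) + 2) * ((p : ℝ) + 3)^2 := by
    rw [sum_ite_adj_inl hq 0 (fun v => (x u0 - x v)^2)]
    rw [hxdef, hu0]
    rw [xvec_inl_zero hq, xvec_inl_one hq, xvec_inl_negone hq]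
    have : ∀ k : Fin p, ((p : ℝ) + 2 - xvec p q (Sum.inr (0, k)))^2 = ((p:ℝ) + 3)^2 := by
      intro k
      rw [xvec_inr hq k]
      ring
    rw [Finset.sum_congr rfl fun k _ => this k, Finset.sum_const, Finset.card_univ,
      Fintype.card_fin]
    push_cast
    ring
  set T : (Fin q ⊕ Fin q × Fin p) → ℝ :=
    fun i => ∑ j, (if (jellyfish p q).Adj i j then (x i - x j)^2 else 0) with hTdef
  have hTnonneg : ∀ i, 0 ≤ T i := by
    intro i
    refine Finset.sum_nonneg fun j _ => ?_
    split
    · positivity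
    · exact le_rfl
  have hg : ∀ i, (if (jellyfish p q).Adj i u0 then (x i - x u0)^2 else 0) ≤ T i := by
    intro i
    refine Finset.single_le_sum
      (f := fun j => if (jellyfish p q).Adj i j then (x i - x j)^2 else 0)
      (fun j _ => ?_) (Finset.mem_univ u0)
    split
    · positivity
    · exact le_rfl
  have hsum2 : 2 * (((p : ℝ) + 2) * ((p : ℝ) + 3)^2) ≤ ∑ i, T i := by
    rw [← Finset.add_sum_erase _ T (Finset.mem_univ u0)]
    have h1 : T u0 = ((p : ℝ) + 2) * ((p : ℝ) + 3)^2 := hS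
    have h2 : ((p : ℝ) + 2) * ((p : ℝ) + 3)^2
        ≤ ∑ i ∈ Finset.univ.erase u0, T i := by
      have e1 : ∑ i ∈ Finset.univ.erase u0,
          (if (jellyfish p q).Adj i u0 then (x i - x u0)^2 else 0)
          ≤ ∑ i ∈ Finset.univ.erase u0, T i :=
        Finset.sum_le_sum fun i _ => hg i
      have e2 : ∑ i ∈ Finset.univ.erase u0,
          (if (jellyfish p q).Adj i u0 then (x i - x u0)^2 else 0)
          = ∑ i, (if (jellyfish p q).Adj i u0 then (x i - x u0)^2 else 0) :=
        Finset.sum_erase _ (by simp [(jellyfish p q).irrefl])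
      have e3 : ∑ i, (if (jellyfish p q).Adj i u0 then (x i - x u0)^2 else 0)
          = ∑ i, (if (jellyfish p q).Adj u0 i then (x u0 - x i)^2 else 0) := by
        refine Finset.sum_congr rfl fun i _ => ?_
        rw [if_congr ((jellyfish p q).adj_comm i u0) rfl rfl, show (x i - x u0)^2
          = (x u0 - x i)^2 from by ring]
      rw [e2, e3, hS] at e1
      exact e1
    linarith
  linarith
end main

section main2
variable {p q : ℕ} [NeZero q]

/-- The scaling weights for the Gershgorin bound. -/
noncomputable def wvec (p q : ℕ) : Fin q ⊕ Fin q × Fin p → ℝ :=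
  Sum.elim (fun _ => (p : ℝ) + 2) (fun _ => 1)

lemma wvec_pos (v : Fin q ⊕ Fin q × Fin p) : 0 < wvec p q v := by
  cases v <;> simp [wvec] <;> positivity

lemma gershgorin_row_bound (hp : 1 ≤ p) (hq : 3 ≤ q) (k : Fin q ⊕ Fin q × Fin p) :
    (jellyfish p q).lapMatrix ℝ k k + (wvec p q k)⁻¹ *
      (∑ j ∈ Finset.univ.erase k, |(jellyfish p q).lapMatrix ℝ k j| * wvec p q j)
      ≤ (p : ℝ) + 5 - 2 / ((p : ℝ) + 2) := by
  have hpne : ((p : ℝ) + 2) ≠ 0 := by positivity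
  rw [lap_offdiag_sum _ (wvec p q) (fun v => (wvec_pos v).le) k, lap_diag]
  cases k with
  | inl i =>
    have hdeg : ((jellyfish p q).degree (Sum.inl i) : ℝ) = (p : ℝ) + 2 := by
      rw [SimpleGraph.degree_eq_sum_if_adj, sum_ite_adj_inl hq i (fun _ => (1:ℝ))]
      simp
      ring
    have hsum : ∑ j, (if (jellyfish p q).Adj (Sum.inl i) j then wvec p q j else 0)
        = 3 * (p : ℝ) + 4 := by
      rw [sum_ite_adj_inl hq i (wvec p q)]
      simp [wvec]
      ring
    rw [hdeg, hsum]
    have : ((p : ℝ) + 2) + (wvec p q (Sum.inl i))⁻¹ * (3 * (p : ℝ) + 4)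
        = (p : ℝ) + 5 - 2 / ((p : ℝ) + 2) := by
      simp only [wvec, Sum.elim_inl]
      field_simp
      ring
    rw [this]
  | inr jk =>
    have hdeg : ((jellyfish p q).degree (Sum.inr jk) : ℝ) = 1 := by
      rw [SimpleGraph.degree_eq_sum_if_adj, sum_ite_adj_inr jk (fun _ => (1:ℝ))]
    have hsum : ∑ j, (if (jellyfish p q).Adj (Sum.inr jk) j then wvec p q j else 0)
        = (p : ℝ) + 2 := by
      rw [sum_ite_adj_inr jk (wvec p q)]
      simp [wvec]
    rw [hdeg, hsum]
    simp only [wvec, Sum.elim_inr, inv_one, one_mul]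
    have h2 : 2 / ((p : ℝ) + 2) ≤ 2 := by
      apply div_le_self (by norm_num)
      have : (0:ℝ) ≤ (p : ℝ) := Nat.cast_nonneg p
      linarith
    linarith

end main2


/-- If `H` is `L`-cospectral with the jellyfish graph `G = JFG(p,q)`
(with `p ≥ 1`, `q ≥ 3`), then the largest Laplacian eigenvalue `μ₁(H)` satisfies
`p + 3 ≤ μ₁(H) ≤ p + 5 − 2/(p + 2)`. -/
theorem laplacian_spectral_radius_bounds_of_cospectral_with_jellyfish
    (p q : ℕ) (hp : 1 ≤ p) (hq : 3 ≤ q)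
    {V : Type*} [Fintype V] [DecidableEq V] (H : SimpleGraph V)
    (hcospec : (H.lapMatrix ℝ).charpoly = ((jellyfish p q).lapMatrix ℝ).charpoly) :
    (p : ℝ) + 3 ≤ (⨆ i, (lapMatrix_isHermitian H).eigenvalues i) ∧
      (⨆ i, (lapMatrix_isHermitian H).eigenvalues i) ≤ (p : ℝ) + 5 - 2 / ((p : ℝ) + 2) := by
  haveI : NeZero q := ⟨by omega⟩
  haveI : Nonempty (Fin q ⊕ Fin q × Fin p) := ⟨Sum.inl ⟨0, by omega⟩⟩
  have hG := lapMatrix_isHermitian (jellyfish p q)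
  have hkey : (⨆ i, (lapMatrix_isHermitian H).eigenvalues i) = ⨆ i, hG.eigenvalues i :=
    ciSup_eigenvalues_eq_of_charpoly_eq (lapMatrix_isHermitian H) hG hcospec
  rw [hkey]
  constructor
  · -- lower bound via Rayleigh quotient
    have hray := dotProduct_mulVec_le_ciSup hG (xvec p q)
    have hnum := xvec_lap_lower hp hq
    have hden := xvec_dotProduct hp hq
    rw [hden] at hray
    have hpos : (0:ℝ) < ((p : ℝ) + 2) * ((p : ℝ) + 3) := by positivity
    have hfin : ((p : ℝ) + 3) * (((p : ℝ) + 2) * ((p : ℝ) + 3))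
        ≤ (⨆ i, hG.eigenvalues i) * (((p : ℝ) + 2) * ((p : ℝ) + 3)) := by
      calc ((p : ℝ) + 3) * (((p : ℝ) + 2) * ((p : ℝ) + 3))
          = ((p : ℝ) + 2) * ((p : ℝ) + 3)^2 := by ring
        _ ≤ xvec p q ⬝ᵥ ((jellyfish p q).lapMatrix ℝ *ᵥ xvec p q) := hnum
        _ ≤ _ := hray
    exact le_of_mul_le_mul_right hfin hpos
  · exact ciSup_le fun i =>
      eigenvalues_le_of_gershgorin hG (wvec p q) wvec_pos _ (gershgorin_row_bound hp hq) i
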